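/- arXiv:math/0405152 — 2 statements merged into one kernel-verified Lean document; each statement's English description precedes it below -/
import Mathlib

section
/- Under the contraction assumption ($|f(z',v)-f(z'',v)|\le\varrho|z'-z''|$, $\varrho<1$, and integrability $E|\xi_1|<\infty$, $E|X_0|<\infty$), the Markov chain $X_n=f(X_{n-1},\xi_n)$ has at most one invariant probability measure: if $\mu$ and $\mu'$ are both invariant probability measures with finite first moment, then $\mu=\mu'$. -/
/-!
Run two copies of the chain, started from `μ` and `μ'`, with the same noise. By invariance the
pair is a coupling of `μ` and `μ'` at every time, and the contraction makes the expected distance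
between the two copies decay like `ϱ ^ n`. Two probability measures admitting couplings with
arbitrarily small expected distance agree on closed sets: by Markov's inequality `μ F` is at most
the `μ'`-measure of every closed thickening of `F`.
-/

open MeasureTheory MeasureTheory.Measure Filter Metric Set
open scoped ENNReal NNReal Topology

namespace MeasureTheory

section Coupling

variable {X Y : Type*} [MeasurableSpace X] [MeasurableSpace Y]

structure IsCoupling (π : Measure (X × Y)) (μ : Measure X) (ν : Measure Y) : Prop where
  map_fst : π.map Prod.fst = μ
  map_snd : π.map Prod.snd = ν

theorem isCoupling_prod (μ : Measure X) (ν : Measure Y) [IsProbabilityMeasure μ]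
    [IsProbabilityMeasure ν] : IsCoupling (μ.prod ν) μ ν :=
  ⟨measurePreserving_fst.map_eq, measurePreserving_snd.map_eq⟩

theorem IsCoupling.isFiniteMeasure {π : Measure (X × Y)} {μ : Measure X} {ν : Measure Y}
    [IsFiniteMeasure μ] (h : IsCoupling π μ ν) : IsFiniteMeasure π :=
  ⟨by simpa [← h.map_fst, map_apply measurable_fst MeasurableSet.univ] using
    measure_lt_top μ univ⟩

theorem IsCoupling.swap {π : Measure (X × Y)} {μ : Measure X} {ν : Measure Y}
    (h : IsCoupling π μ ν) : IsCoupling (π.map Prod.swap) ν μ :=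
  ⟨by rw [map_map measurable_fst measurable_swap]; exact h.map_snd,
    by rw [map_map measurable_snd measurable_swap]; exact h.map_fst⟩

end Coupling

section SynchronousCoupling

variable {X V : Type*} [MeasurableSpace X] [MeasurableSpace V] {f : X → V → X} {ν : Measure V}

variable (f ν) in
noncomputable def synchronousStep (π : Measure (X × X)) : Measure (X × X) :=
  (π.prod ν).map fun q => (f q.1.1 q.2, f q.1.2 q.2)

instance [SFinite ν] (π : Measure (X × X)) [SFinite π] : SFinite (synchronousStep f ν π) := by
  unfold synchronousStep; infer_instance

theorem measurable_synchronousMap (hfm : Measurable (Function.uncurry f)) :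
    Measurable fun q : (X × X) × V => (f q.1.1 q.2, f q.1.2 q.2) :=
  (hfm.comp (measurable_fst.fst.prodMk measurable_snd)).prodMk
    (hfm.comp (measurable_fst.snd.prodMk measurable_snd))

theorem map_synchronousStep {g : X × X → X} (hg : Measurable g)
    (hfm : Measurable (Function.uncurry f)) (hgf : ∀ q v, g (f q.1 v, f q.2 v) = f (g q) v)
    (π : Measure (X × X)) [SFinite π] [SFinite ν] :
    (synchronousStep f ν π).map g = ((π.map g).prod ν).map (Function.uncurry f) := by
  calc (synchronousStep f ν π).map g
      = (π.prod ν).map (Function.uncurry f ∘ Prod.map g id) := by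
        rw [synchronousStep, map_map hg (measurable_synchronousMap hfm)]
        exact congrArg (Measure.map · (π.prod ν)) (funext fun q : (X × X) × V => hgf q.1 q.2)
    _ = ((π.map g).prod (ν.map id)).map (Function.uncurry f) := by
        rw [map_prod_map π ν hg measurable_id, map_map hfm (hg.prodMap measurable_id)]
    _ = ((π.map g).prod ν).map (Function.uncurry f) := by rw [Measure.map_id]

theorem isCoupling_synchronousStep [SFinite ν] {π : Measure (X × X)} {μ μ' : Measure X}
    [IsFiniteMeasure μ] (hπ : IsCoupling π μ μ') (hfm : Measurable (Function.uncurry f))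
    (hμ : (μ.prod ν).map (Function.uncurry f) = μ)
    (hμ' : (μ'.prod ν).map (Function.uncurry f) = μ') :
    IsCoupling (synchronousStep f ν π) μ μ' := by
  have := hπ.isFiniteMeasure
  exact ⟨by rw [map_synchronousStep measurable_fst hfm (fun _ _ => rfl), hπ.map_fst, hμ],
    by rw [map_synchronousStep measurable_snd hfm (fun _ _ => rfl), hπ.map_snd, hμ']⟩

theorem isCoupling_iterate_synchronousStep [SFinite ν] {π : Measure (X × X)}
    {μ μ' : Measure X} [IsFiniteMeasure μ] (hπ : IsCoupling π μ μ')
    (hfm : Measurable (Function.uncurry f)) (hμ : (μ.prod ν).map (Function.uncurry f) = μ)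
    (hμ' : (μ'.prod ν).map (Function.uncurry f) = μ') (n : ℕ) :
    IsCoupling ((synchronousStep f ν)^[n] π) μ μ' := by
  induction n with
  | zero => exact hπ
  | succ n ih =>
    rw [Function.iterate_succ_apply']
    exact isCoupling_synchronousStep ih hfm hμ hμ'

end SynchronousCoupling

section Contraction

variable {X : Type*} [PseudoEMetricSpace X] [MeasurableSpace X] [OpensMeasurableSpace X]
  [SecondCountableTopology X]

theorem lintegral_edist_map_swap (π : Measure (X × X)) :
    ∫⁻ q, edist q.1 q.2 ∂π.map Prod.swap = ∫⁻ q, edist q.1 q.2 ∂π := by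
  rw [lintegral_map measurable_edist measurable_swap]
  simp only [Prod.fst_swap, Prod.snd_swap, edist_comm]

theorem lintegral_edist_prod_lt_top {μ μ' : Measure X} [IsProbabilityMeasure μ]
    [IsProbabilityMeasure μ'] {x₀ : X} (hμ : ∫⁻ x, edist x x₀ ∂μ < ∞)
    (hμ' : ∫⁻ x, edist x x₀ ∂μ' < ∞) : ∫⁻ q, edist q.1 q.2 ∂μ.prod μ' < ∞ := by
  calc ∫⁻ q, edist q.1 q.2 ∂μ.prod μ'
      ≤ ∫⁻ q, (edist q.1 x₀ + edist q.2 x₀) ∂μ.prod μ' :=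
        lintegral_mono fun q => edist_triangle_right _ _ _
    _ = ∫⁻ x, edist x x₀ ∂μ + ∫⁻ x, edist x x₀ ∂μ' := by
        rw [lintegral_add_left (f := fun q : X × X => edist q.1 x₀) (by fun_prop),
          measurePreserving_fst.lintegral_comp (f := (edist · x₀)) (by fun_prop),
          measurePreserving_snd.lintegral_comp (f := (edist · x₀)) (by fun_prop)]
    _ < ∞ := ENNReal.add_lt_top.2 ⟨hμ, hμ'⟩

theorem IsCoupling.measure_le_measure_cthickening_add {π : Measure (X × X)} {μ μ' : Measure X}
    (hπ : IsCoupling π μ μ') {F : Set X} (hF : MeasurableSet F) {δ : ℝ} (hδ : 0 < δ) :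
    μ F ≤ μ' (cthickening δ F) + (∫⁻ q, edist q.1 q.2 ∂π) / ENNReal.ofReal δ := by
  have hsub : Prod.fst ⁻¹' F ⊆
      Prod.snd ⁻¹' cthickening δ F ∪ {q | ENNReal.ofReal δ ≤ edist q.1 q.2} := by
    intro q hq
    by_cases hfar : ENNReal.ofReal δ ≤ edist q.1 q.2
    · exact Or.inr hfar
    · refine Or.inl (mem_cthickening_of_edist_le q.2 q.1 δ F hq ?_)
      rw [edist_comm]
      exact (not_le.1 hfar).le
  calc μ F = π (Prod.fst ⁻¹' F) := by rw [← hπ.map_fst, map_apply measurable_fst hF]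
    _ ≤ π (Prod.snd ⁻¹' cthickening δ F) + π {q | ENNReal.ofReal δ ≤ edist q.1 q.2} :=
        (measure_mono hsub).trans (measure_union_le _ _)
    _ ≤ μ' (cthickening δ F) + (∫⁻ q, edist q.1 q.2 ∂π) / ENNReal.ofReal δ := by
        rw [← hπ.map_snd, map_apply measurable_snd isClosed_cthickening.measurableSet]
        gcongr
        exact meas_ge_le_lintegral_div measurable_edist.aemeasurable
          (ENNReal.ofReal_pos.2 hδ).ne' ENNReal.ofReal_ne_top

theorem measure_le_of_tendsto_lintegral_edist {ι : Type*} {l : Filter ι} [l.NeBot]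
    {π : ι → Measure (X × X)} {μ μ' : Measure X} [IsFiniteMeasure μ']
    (hπ : ∀ i, IsCoupling (π i) μ μ')
    (hlim : Tendsto (fun i => ∫⁻ q, edist q.1 q.2 ∂π i) l (𝓝 0)) {F : Set X}
    (hF : IsClosed F) : μ F ≤ μ' F := by
  have hthick : ∀ δ > 0, μ F ≤ μ' (cthickening δ F) := by
    intro δ hδ
    have herr : Tendsto (fun i => μ' (cthickening δ F) +
        (∫⁻ q, edist q.1 q.2 ∂π i) / ENNReal.ofReal δ) l (𝓝 (μ' (cthickening δ F))) := by
      simpa using tendsto_const_nhds.add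
        (ENNReal.Tendsto.div_const hlim (Or.inr (ENNReal.ofReal_pos.2 hδ).ne'))
    exact ge_of_tendsto' herr fun i =>
      (hπ i).measure_le_measure_cthickening_add hF.measurableSet hδ
  exact ge_of_tendsto
    ((tendsto_measure_cthickening_of_isClosed ⟨1, one_pos, measure_ne_top _ _⟩ hF).mono_left
      (nhdsWithin_le_nhds (s := Ioi 0)))
    (eventually_nhdsWithin_of_forall hthick)

theorem eq_of_tendsto_lintegral_edist [BorelSpace X] {ι : Type*} {l : Filter ι} [l.NeBot]
    {π : ι → Measure (X × X)} {μ μ' : Measure X} [IsFiniteMeasure μ] [IsFiniteMeasure μ']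
    (hπ : ∀ i, IsCoupling (π i) μ μ')
    (hlim : Tendsto (fun i => ∫⁻ q, edist q.1 q.2 ∂π i) l (𝓝 0)) : μ = μ' := by
  have hswap : Tendsto (fun i => ∫⁻ q, edist q.1 q.2 ∂(π i).map Prod.swap) l (𝓝 0) := by
    simpa only [lintegral_edist_map_swap] using hlim
  have hclosed : ∀ F, IsClosed F → μ F = μ' F := fun F hF =>
    le_antisymm (measure_le_of_tendsto_lintegral_edist hπ hlim hF)
      (measure_le_of_tendsto_lintegral_edist (fun i => (hπ i).swap) hswap hF)
  refine ext_of_generate_finite _ ?_ isPiSystem_isClosed hclosed (hclosed _ isClosed_univ)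
  rw [BorelSpace.measurable_eq (α := X), borel_eq_generateFrom_isClosed]

variable {V : Type*} [MeasurableSpace V] {f : X → V → X} {ν : Measure V} {K : ℝ≥0}

theorem lintegral_edist_synchronousStep_le [IsProbabilityMeasure ν]
    (hf : ∀ v, LipschitzWith K (f · v)) (hfm : Measurable (Function.uncurry f))
    (π : Measure (X × X)) [SFinite π] :
    ∫⁻ q, edist q.1 q.2 ∂synchronousStep f ν π ≤ K * ∫⁻ q, edist q.1 q.2 ∂π := by
  calc ∫⁻ q, edist q.1 q.2 ∂synchronousStep f ν π
      = ∫⁻ q, edist (f q.1.1 q.2) (f q.1.2 q.2) ∂π.prod ν :=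
        lintegral_map measurable_edist (measurable_synchronousMap hfm)
    _ ≤ ∫⁻ q, K * edist q.1.1 q.1.2 ∂π.prod ν :=
        lintegral_mono fun q => (hf q.2).edist_le_mul _ _
    _ = K * ∫⁻ q, edist q.1 q.2 ∂π := by
        rw [lintegral_const_mul (f := fun q : (X × X) × V => edist q.1.1 q.1.2) _
            (measurable_edist.comp measurable_fst),
          measurePreserving_fst.lintegral_comp (f := fun q : X × X => edist q.1 q.2)
            measurable_edist]

theorem lintegral_edist_iterate_synchronousStep_le [IsProbabilityMeasure ν]
    (hf : ∀ v, LipschitzWith K (f · v)) (hfm : Measurable (Function.uncurry f))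
    (π : Measure (X × X)) [SFinite π] (n : ℕ) :
    ∫⁻ q, edist q.1 q.2 ∂(synchronousStep f ν)^[n] π ≤ K ^ n * ∫⁻ q, edist q.1 q.2 ∂π := by
  induction n generalizing π with
  | zero => simp
  | succ n ih =>
    rw [Function.iterate_succ_apply, pow_succ, mul_assoc]
    exact (ih _).trans (by gcongr; exact lintegral_edist_synchronousStep_le hf hfm π)

theorem eq_of_invariant_of_lipschitzWith [BorelSpace X] [IsProbabilityMeasure ν] (hK : K < 1)
    (hf : ∀ v, LipschitzWith K (f · v)) (hfm : Measurable (Function.uncurry f))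
    {μ μ' : Measure X} [IsProbabilityMeasure μ] [IsProbabilityMeasure μ'] {x₀ : X}
    (hμ₁ : ∫⁻ x, edist x x₀ ∂μ < ∞) (hμ'₁ : ∫⁻ x, edist x x₀ ∂μ' < ∞)
    (hμ : (μ.prod ν).map (Function.uncurry f) = μ)
    (hμ' : (μ'.prod ν).map (Function.uncurry f) = μ') : μ = μ' := by
  have hdecay : Tendsto (fun n : ℕ => (K : ℝ≥0∞) ^ n * ∫⁻ q, edist q.1 q.2 ∂μ.prod μ') atTop
      (𝓝 0) := by
    simpa using ENNReal.Tendsto.mul_const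
      (ENNReal.tendsto_pow_atTop_nhds_zero_of_lt_one (ENNReal.coe_lt_one_iff.2 hK))
      (Or.inr (lintegral_edist_prod_lt_top hμ₁ hμ'₁).ne)
  refine eq_of_tendsto_lintegral_edist
    (isCoupling_iterate_synchronousStep (isCoupling_prod μ μ') hfm hμ hμ')
    (tendsto_of_tendsto_of_tendsto_of_le_of_le tendsto_const_nhds hdecay (fun _ => bot_le)
      (lintegral_edist_iterate_synchronousStep_le hf hfm _))

end Contraction

end MeasureTheory

theorem stmt2_general {d p : ℕ}
    (f : (Fin d → ℝ) → (Fin p → ℝ) → (Fin d → ℝ)) (ϱ : ℝ) (hϱ : ϱ < 1)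
    (hf : ∀ z' z'' v, ‖f z' v - f z'' v‖ ≤ ϱ * ‖z' - z''‖)
    (hfm : Measurable (Function.uncurry f))
    (ν : Measure (Fin p → ℝ)) [IsProbabilityMeasure ν]
    (μ μ' : Measure (Fin d → ℝ)) [IsProbabilityMeasure μ] [IsProbabilityMeasure μ']
    (hμ1 : ∫⁻ z, ‖z‖₊ ∂μ < ⊤) (hμ'1 : ∫⁻ z, ‖z‖₊ ∂μ' < ⊤)
    (hinv : (μ.prod ν).map (fun q => f q.1 q.2) = μ)
    (hinv' : (μ'.prod ν).map (fun q => f q.1 q.2) = μ') :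
    μ = μ' := by
  have hlip : ∀ v, LipschitzWith ϱ.toNNReal (f · v) := fun v =>
    LipschitzWith.of_dist_le_mul fun z' z'' => by
      simpa only [dist_eq_norm, Real.coe_toNNReal'] using
        (hf z' z'' v).trans (mul_le_mul_of_nonneg_right (le_max_left _ _) (norm_nonneg _))
  have hmoment : ∀ {m : Measure (Fin d → ℝ)}, ∫⁻ z, ‖z‖₊ ∂m < ⊤ → ∫⁻ z, edist z 0 ∂m < ∞ := by
    intro m hm
    simpa only [edist_zero_right, enorm_eq_nnnorm] using hm
  exact eq_of_invariant_of_lipschitzWith (Real.toNNReal_lt_one.2 hϱ) hlip hfm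
    (hmoment hμ1) (hmoment hμ'1) hinv hinv'

theorem stmt2 {d p : ℕ}
    (f : (Fin d → ℝ) → (Fin p → ℝ) → (Fin d → ℝ)) (ϱ : ℝ) (hϱ : ϱ < 1)
    (hf : ∀ z' z'' v, ‖f z' v - f z'' v‖ ≤ ϱ * ‖z' - z''‖)
    (hfm : Measurable (Function.uncurry f))
    (ν : Measure (Fin p → ℝ)) [IsProbabilityMeasure ν]
    (hν : ∫⁻ v, ‖v‖₊ ∂ν < ⊤)
    (μ μ' : Measure (Fin d → ℝ)) [IsProbabilityMeasure μ] [IsProbabilityMeasure μ']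
    (hμ1 : ∫⁻ z, ‖z‖₊ ∂μ < ⊤) (hμ'1 : ∫⁻ z, ‖z‖₊ ∂μ' < ⊤)
    (hinv : (μ.prod ν).map (fun q => f q.1 q.2) = μ)
    (hinv' : (μ'.prod ν).map (fun q => f q.1 q.2) = μ') :
    μ = μ' :=
  stmt2_general f ϱ hϱ hf hfm ν μ μ' hμ1 hμ'1 hinv hinv'
end

section
/- Let $B$ be a symmetric positive semidefinite $d\times d$ real matrix with Moore–Penrose pseudoinverse $B^\oplus$, and for $\beta>0$ set $I_\beta(y) = \frac{1}{2} y^*(\beta I + B)^{-1} y$. Then as $\beta\to0$: if $B^\oplus B y = y$ then $I_\beta(y) \to \frac{1}{2} y^* B^\oplus y$, while if $B^\oplus B y \ne y$ then $I_\beta(y) \to \infty$. -/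
/-!
With `M = (β • 1 + B)⁻¹` one has `B M = M B = 1 - β M`. If `y = B z`, this gives
`y ⬝ M y = z ⬝ B z - β (z ⬝ M B z)` with `0 ≤ z ⬝ M B z ≤ z ⬝ z`, so the form converges to
`z ⬝ B z = y ⬝ Bp y`. Otherwise `w = y - Bp B y` is a nonzero vector of `ker B` orthogonal to
`Bp B y`; `M` acts on it as `β⁻¹`, so the form is at least `β⁻¹ (w ⬝ w)`.
-/

open Filter Set Matrix Topology

namespace Matrix

lemma IsSymm.mulVec_dotProduct {n R : Type*} [Fintype n] [CommSemiring R] {N : Matrix n n R}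
    (hN : N.IsSymm) (v w : n → R) : N *ᵥ v ⬝ᵥ w = v ⬝ᵥ N *ᵥ w := by
  rw [dotProduct_mulVec, ← mulVec_transpose, hN.eq]

lemma PosSemidef.posDef_smul_one_add {n : Type*} [DecidableEq n] {B : Matrix n n ℝ} {β : ℝ}
    (hB : B.PosSemidef) (hβ : 0 < β) : (β • 1 + B).PosDef :=
  (PosDef.one.smul hβ).add_posSemidef hB

variable {n : Type*} [Fintype n] [DecidableEq n]

section CommRing

variable {R : Type*} [CommRing R] {B : Matrix n n R} {β : R}

lemma mul_inv_smul_one_add (h : IsUnit (β • 1 + B).det) :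
    B * (β • 1 + B)⁻¹ = 1 - β • (β • 1 + B)⁻¹ := by
  rw [eq_sub_iff_add_eq', ← smul_one_mul, ← add_mul, mul_nonsing_inv _ h]

lemma inv_smul_one_add_mul (h : IsUnit (β • 1 + B).det) :
    (β • 1 + B)⁻¹ * B = 1 - β • (β • 1 + B)⁻¹ := by
  rw [eq_sub_iff_add_eq', ← mul_smul_one, ← mul_add, nonsing_inv_mul _ h]

lemma mul_inv_smul_one_add_mul (h : IsUnit (β • 1 + B).det) :
    B * (β • 1 + B)⁻¹ * B = B - β • ((β • 1 + B)⁻¹ * B) := by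
  rw [mul_inv_smul_one_add h, sub_mul, one_mul, smul_mul_assoc]

end CommRing

lemma inv_smul_one_add_mulVec_of_mulVec_eq_zero {K : Type*} [Field K] {B : Matrix n n K} {β : K}
    (h : IsUnit (β • 1 + B).det) (hβ : β ≠ 0) {w : n → K} (hw : B *ᵥ w = 0) :
    (β • 1 + B)⁻¹ *ᵥ w = β⁻¹ • w := by
  have hAw : (β • 1 + B) *ᵥ (β⁻¹ • w) = w := by
    rw [add_mulVec, smul_mulVec, one_mulVec, mulVec_smul, hw, smul_zero, add_zero, smul_smul,
      mul_inv_cancel₀ hβ, one_smul]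
  conv_lhs => rw [← hAw]
  rw [mulVec_mulVec, nonsing_inv_mul _ h, one_mulVec]

namespace PosSemidef

variable {B : Matrix n n ℝ} {β : ℝ}

lemma isUnit_det_smul_one_add (hB : B.PosSemidef) (hβ : 0 < β) : IsUnit (β • 1 + B).det :=
  (hB.posDef_smul_one_add hβ).det_pos.ne'.isUnit

lemma inv_smul_one_add_mul (hB : B.PosSemidef) (hβ : 0 < β) :
    ((β • 1 + B)⁻¹ * B).PosSemidef := by
  set M := (β • 1 + B)⁻¹
  have hM : Mᴴ = M := (hB.posDef_smul_one_add hβ).inv.isHermitian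
  -- `M B = M (β B + B²) M`, a congruence of a positive semidefinite matrix.
  have hBA : (B * (β • 1 + B)).PosSemidef := by
    have hBB := posSemidef_conjTranspose_mul_self B
    rw [hB.isHermitian.eq] at hBB
    rw [mul_add, mul_smul_one]
    exact (hB.smul hβ.le).add hBB
  have hMB : M * B = Mᴴ * (B * (β • 1 + B)) * M := by
    rw [hM, Matrix.mul_assoc M, Matrix.mul_assoc B,
      mul_nonsing_inv _ (hB.isUnit_det_smul_one_add hβ), Matrix.mul_one]
  rw [hMB]
  exact hBA.conjTranspose_mul_mul_same M

lemma dotProduct_inv_smul_one_add_mulVec_mem_Icc (hB : B.PosSemidef) (hβ : 0 < β) (z : n → ℝ) :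
    B *ᵥ z ⬝ᵥ (β • 1 + B)⁻¹ *ᵥ B *ᵥ z ∈ Icc (z ⬝ᵥ B *ᵥ z - β * (z ⬝ᵥ z)) (z ⬝ᵥ B *ᵥ z) := by
  have h := hB.isUnit_det_smul_one_add hβ
  have hsymm : B.IsSymm := by simpa using hB.isHermitian
  set q := z ⬝ᵥ ((β • 1 + B)⁻¹ * B) *ᵥ z
  have hq : B *ᵥ z ⬝ᵥ (β • 1 + B)⁻¹ *ᵥ B *ᵥ z = z ⬝ᵥ B *ᵥ z - β * q := by
    rw [hsymm.mulVec_dotProduct, mulVec_mulVec, mulVec_mulVec, mul_inv_smul_one_add_mul h,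
      sub_mulVec, dotProduct_sub, smul_mulVec, dotProduct_smul, smul_eq_mul]
  have hq_nonneg : 0 ≤ q := by
    simpa using (hB.inv_smul_one_add_mul hβ).dotProduct_mulVec_nonneg z
  have hq_le : q ≤ z ⬝ᵥ z := by
    have hM := ((hB.posDef_smul_one_add hβ).inv.posSemidef.dotProduct_mulVec_nonneg z)
    simp only [star_trivial] at hM
    simp only [q, Matrix.inv_smul_one_add_mul h, sub_mulVec, one_mulVec, dotProduct_sub,
      smul_mulVec, dotProduct_smul, smul_eq_mul]
    nlinarith
  rw [hq]
  constructor <;> nlinarith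

lemma tendsto_dotProduct_inv_smul_one_add_mulVec (hB : B.PosSemidef) (z : n → ℝ) :
    Tendsto (fun β : ℝ => B *ᵥ z ⬝ᵥ (β • 1 + B)⁻¹ *ᵥ B *ᵥ z) (𝓝[>] 0) (𝓝 (z ⬝ᵥ B *ᵥ z)) := by
  have hlower : Tendsto (fun β : ℝ => z ⬝ᵥ B *ᵥ z - β * (z ⬝ᵥ z)) (𝓝[>] 0)
      (𝓝 (z ⬝ᵥ B *ᵥ z)) := by
    refine tendsto_nhdsWithin_of_tendsto_nhds ?_
    exact Continuous.tendsto' (by fun_prop) 0 _ (by simp)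
  have hbounds : ∀ᶠ β in 𝓝[>] 0, B *ᵥ z ⬝ᵥ (β • 1 + B)⁻¹ *ᵥ B *ᵥ z ∈
      Icc (z ⬝ᵥ B *ᵥ z - β * (z ⬝ᵥ z)) (z ⬝ᵥ B *ᵥ z) :=
    eventually_mem_nhdsWithin.mono fun β hβ => hB.dotProduct_inv_smul_one_add_mulVec_mem_Icc hβ z
  exact tendsto_of_tendsto_of_tendsto_of_le_of_le' hlower tendsto_const_nhds
    (hbounds.mono fun _ h => h.1) (hbounds.mono fun _ h => h.2)

lemma inv_mul_le_dotProduct_inv_smul_one_add_mulVec (hB : B.PosSemidef) (hβ : 0 < β)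
    {p w : n → ℝ} (hw : B *ᵥ w = 0) (hpw : p ⬝ᵥ w = 0) :
    β⁻¹ * (w ⬝ᵥ w) ≤ (p + w) ⬝ᵥ (β • 1 + B)⁻¹ *ᵥ (p + w) := by
  have hA := hB.posDef_smul_one_add hβ
  have hMsymm : ((β • 1 + B)⁻¹).IsSymm := by simpa using hA.inv.isHermitian
  have hMw := inv_smul_one_add_mulVec_of_mulVec_eq_zero (hB.isUnit_det_smul_one_add hβ) hβ.ne' hw
  have hMp : 0 ≤ p ⬝ᵥ (β • 1 + B)⁻¹ *ᵥ p := by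
    simpa using hA.inv.posSemidef.dotProduct_mulVec_nonneg p
  have hexpand : (p + w) ⬝ᵥ (β • 1 + B)⁻¹ *ᵥ (p + w) =
      p ⬝ᵥ (β • 1 + B)⁻¹ *ᵥ p + β⁻¹ * (w ⬝ᵥ w) := by
    rw [mulVec_add, dotProduct_add, add_dotProduct, add_dotProduct, ← hMsymm.mulVec_dotProduct w,
      hMw, smul_dotProduct, dotProduct_smul, dotProduct_comm w p, hpw]
    simp
  linarith

lemma tendsto_dotProduct_inv_smul_one_add_mulVec_atTop (hB : B.PosSemidef) {p w : n → ℝ}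
    (hw : B *ᵥ w = 0) (hw0 : w ≠ 0) (hpw : p ⬝ᵥ w = 0) :
    Tendsto (fun β : ℝ => (p + w) ⬝ᵥ (β • 1 + B)⁻¹ *ᵥ (p + w)) (𝓝[>] 0) atTop := by
  have hww : 0 < w ⬝ᵥ w := by simpa using dotProduct_star_self_pos_iff.mpr hw0
  refine tendsto_atTop_mono' _ ?_ (tendsto_inv_nhdsGT_zero.atTop_mul_const hww)
  exact eventually_mem_nhdsWithin.mono fun β hβ =>
    hB.inv_mul_le_dotProduct_inv_smul_one_add_mulVec hβ hw hpw

end PosSemidef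

end Matrix

theorem stmt13_general {d : ℕ} (B Bp : Matrix (Fin d) (Fin d) ℝ)
    (hB : B.PosSemidef)
    (h1 : B * Bp * B = B)
    (h4 : (Bp * B)ᵀ = Bp * B)
    (y : Fin d → ℝ) :
    (Bp.mulVec (B.mulVec y) = y →
      Tendsto (fun β : ℝ =>
          (1 / 2) * (y ⬝ᵥ ((β • (1 : Matrix (Fin d) (Fin d) ℝ) + B)⁻¹).mulVec y))
        (nhdsWithin 0 (Set.Ioi 0)) (nhds ((1 / 2) * (y ⬝ᵥ Bp.mulVec y)))) ∧
    (Bp.mulVec (B.mulVec y) ≠ y →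
      Tendsto (fun β : ℝ =>
          (1 / 2) * (y ⬝ᵥ ((β • (1 : Matrix (Fin d) (Fin d) ℝ) + B)⁻¹).mulVec y))
        (nhdsWithin 0 (Set.Ioi 0)) atTop) := by
  have hBsymm : B.IsSymm := by simpa using hB.isHermitian
  have hPsymm : (Bp * B).IsSymm := h4
  refine ⟨fun hy => ?_, fun hy => ?_⟩
  · set z := Bpᵀ *ᵥ y
    have hBz : B *ᵥ z = y := by
      rw [mulVec_mulVec, ← hBsymm.eq, ← transpose_mul, h4, ← mulVec_mulVec, hy]
    have hzy : z ⬝ᵥ y = y ⬝ᵥ Bp *ᵥ y := by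
      rw [dotProduct_mulVec, ← mulVec_transpose]
    have hlim := (hB.tendsto_dotProduct_inv_smul_one_add_mulVec z).const_mul (1 / 2)
    rwa [hBz, hzy] at hlim
  · rw [mulVec_mulVec] at hy
    set p := (Bp * B) *ᵥ y
    have hw : B *ᵥ (y - p) = 0 := by
      rw [mulVec_sub, mulVec_mulVec, ← Matrix.mul_assoc, h1, sub_self]
    have hpw : p ⬝ᵥ (y - p) = 0 := by
      rw [hPsymm.mulVec_dotProduct, ← mulVec_mulVec, hw, mulVec_zero, dotProduct_zero]
    have hw0 : y - p ≠ 0 := sub_ne_zero.mpr (Ne.symm hy)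
    have hlim := (hB.tendsto_dotProduct_inv_smul_one_add_mulVec_atTop hw hw0 hpw).const_mul_atTop
      (by norm_num : (0 : ℝ) < 1 / 2)
    rwa [add_sub_cancel] at hlim

theorem stmt13 {d : ℕ} (B Bp : Matrix (Fin d) (Fin d) ℝ)
    (hB : B.PosSemidef)
    (h1 : B * Bp * B = B) (h2 : Bp * B * Bp = Bp)
    (h3 : (B * Bp)ᵀ = B * Bp) (h4 : (Bp * B)ᵀ = Bp * B)
    (y : Fin d → ℝ) :
    (Bp.mulVec (B.mulVec y) = y →
      Tendsto (fun β : ℝ =>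
          (1 / 2) * (y ⬝ᵥ ((β • (1 : Matrix (Fin d) (Fin d) ℝ) + B)⁻¹).mulVec y))
        (nhdsWithin 0 (Set.Ioi 0)) (nhds ((1 / 2) * (y ⬝ᵥ Bp.mulVec y)))) ∧
    (Bp.mulVec (B.mulVec y) ≠ y →
      Tendsto (fun β : ℝ =>
          (1 / 2) * (y ⬝ᵥ ((β • (1 : Matrix (Fin d) (Fin d) ℝ) + B)⁻¹).mulVec y))
        (nhdsWithin 0 (Set.Ioi 0)) atTop) :=
  stmt13_general B Bp hB h1 h4 y
end
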